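/- For any graph G = (V,E) with a vertex u of degree at least 2 and adjacent vertices v, w of u that are themselves adjacent, the three graph-state generators g^u, g^v, g^w form an AvN triple. -/

import Mathlib

/-- Pauli labels. -/
inductive PLbl : Type
  | I | X | Y | Z
deriving DecidableEq

instance instFintypePLbl : Fintype PLbl :=
  ⟨{PLbl.I, PLbl.X, PLbl.Y, PLbl.Z}, fun x => by cases x <;> simp⟩

open PLbl

/-- Multiplication of Pauli labels, discarding the phase. -/
def lmul : PLbl → PLbl → PLbl
  | I, p => p
  | p, I => p
  | X, X => I
  | Y, Y => I
  | Z, Z => I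
  | X, Y => Z
  | Y, X => Z
  | Y, Z => X
  | Z, Y => X
  | Z, X => Y
  | X, Z => Y

/-- Phase (as a power of i, in ℤ₄) arising from multiplying two Pauli labels:
XY = iZ, YZ = iX, ZX = iY, YX = -iZ, ZY = -iX, XZ = -iY. -/
def lphase : PLbl → PLbl → ZMod 4
  | X, Y => 1
  | Y, Z => 1
  | Z, X => 1
  | Y, X => 3
  | Z, Y => 3
  | X, Z => 3
  | _, _ => 0

/-- An element of the Pauli group indexed by a finite vertex set V. -/
def PauliElV (V : Type) [Fintype V] : Type := ZMod 4 × (V → PLbl)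

/-- Multiplication in the Pauli group over V. -/
def pmulV {V : Type} [Fintype V] (p q : PauliElV V) : PauliElV V :=
  (p.1 + q.1 + ∑ i, lphase (p.2 i) (q.2 i), fun i => lmul (p.2 i) (q.2 i))

/-- The graph-state generator at a vertex u: X at u, Z at neighbours of u,
I elsewhere, with phase +1. -/
def graphGen {V : Type} [Fintype V] [DecidableEq V] (G : SimpleGraph V)
    [DecidableRel G.Adj] (u : V) : PauliElV V :=
  (0, fun x => if x = u then PLbl.X else if G.Adj u x then PLbl.Z else PLbl.I)

/-- AvN triple (standard definition): pairwise commuting elements with phases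
±1 such that at each coordinate at least two of the components agree, and the
number of coordinates where e and g agree, differ from f, and none is I, is odd. -/
def IsAvNTripleV {V : Type} [Fintype V] [DecidableEq V] (e f g : PauliElV V) : Prop :=
  (e.1 = 0 ∨ e.1 = 2) ∧ (f.1 = 0 ∨ f.1 = 2) ∧ (g.1 = 0 ∨ g.1 = 2) ∧
  pmulV e f = pmulV f e ∧ pmulV f g = pmulV g f ∧ pmulV e g = pmulV g e ∧
  (∀ i, e.2 i = f.2 i ∨ f.2 i = g.2 i ∨ e.2 i = g.2 i) ∧
  Odd (Finset.univ.filter (fun i =>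
    e.2 i = g.2 i ∧ g.2 i ≠ f.2 i ∧ e.2 i ≠ I ∧ f.2 i ≠ I ∧ g.2 i ≠ I)).card

lemma lmul_comm' (a b : PLbl) : lmul a b = lmul b a := by
  cases a <;> cases b <;> rfl

lemma lphase_eq' (a b : PLbl) :
    lphase a b = lphase b a + (if a ≠ I ∧ b ≠ I ∧ a ≠ b then 2 else 0) := by
  cases a <;> cases b <;> decide

lemma gen_comm {V : Type} [Fintype V] [DecidableEq V] (G : SimpleGraph V)
    [DecidableRel G.Adj] (a b : V) (hab : G.Adj a b) :
    pmulV (graphGen G a) (graphGen G b) = pmulV (graphGen G b) (graphGen G a) := by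
  have hne : a ≠ b := hab.ne
  have hS : ∀ i, lphase ((graphGen G a).2 i) ((graphGen G b).2 i)
      = lphase ((graphGen G b).2 i) ((graphGen G a).2 i)
        + ((if i = a then (2 : ZMod 4) else 0) + (if i = b then 2 else 0)) := by
    intro i
    rw [lphase_eq']
    congr 1
    by_cases hia : i = a
    · subst hia
      simp [graphGen, hne, Ne.symm hne, hab.symm]
    · by_cases hib : i = b
      · subst hib
        simp [graphGen, hne, Ne.symm hne, hab, hia]
      · simp only [graphGen, if_neg hia, if_neg hib]
        split_ifs <;> simp_all
  have hsum : ∑ i, lphase ((graphGen G a).2 i) ((graphGen G b).2 i)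
      = ∑ i, lphase ((graphGen G b).2 i) ((graphGen G a).2 i) := by
    rw [Finset.sum_congr rfl (fun i _ => hS i), Finset.sum_add_distrib,
      Finset.sum_add_distrib, Finset.sum_ite_eq' Finset.univ a (fun _ => (2 : ZMod 4)),
      Finset.sum_ite_eq' Finset.univ b (fun _ => (2 : ZMod 4))]
    simp
    decide
  unfold pmulV
  refine Prod.ext ?_ (funext fun i => lmul_comm' _ _)
  simp only [hsum, add_comm]

/-- If a vertex u has degree ≥ 2 and two adjacent neighbours v, w which are
themselves adjacent, then the generators g^u, g^v, g^w form an AvN triple. -/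
theorem graph_gens_avn_triangle {V : Type} [Fintype V] [DecidableEq V]
    (G : SimpleGraph V) [DecidableRel G.Adj] (u v w : V)
    (hdeg : 2 ≤ G.degree u)
    (huv : G.Adj u v) (huw : G.Adj u w) (hvw : G.Adj v w) :
    IsAvNTripleV (graphGen G u) (graphGen G v) (graphGen G w) := by
  have huv' : u ≠ v := huv.ne
  have huw' : u ≠ w := huw.ne
  have hvw' : v ≠ w := hvw.ne
  refine ⟨Or.inl rfl, Or.inl rfl, Or.inl rfl,
    gen_comm G u v huv, gen_comm G v w hvw, gen_comm G u w huw, ?_, ?_⟩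
  · intro i
    by_cases hiu : i = u
    · subst hiu
      right; left
      simp [graphGen, huv', huw', Ne.symm huv', Ne.symm huw', huv.symm, huw.symm]
    · by_cases hiv : i = v
      · subst hiv
        right; right
        simp [graphGen, huv, hiu, hvw', Ne.symm hvw', hvw.symm]
      · by_cases hiw : i = w
        · subst hiw
          left
          simp [graphGen, huw, hvw, hiu, hiv]
        · simp only [graphGen, if_neg hiu, if_neg hiv, if_neg hiw]
          split_ifs <;> simp_all
  · have hset : (Finset.univ.filter (fun i =>
        (graphGen G u).2 i = (graphGen G w).2 i ∧
        (graphGen G w).2 i ≠ (graphGen G v).2 i ∧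
        (graphGen G u).2 i ≠ I ∧ (graphGen G v).2 i ≠ I ∧
        (graphGen G w).2 i ≠ I)) = {v} := by
      ext i
      simp only [Finset.mem_filter, Finset.mem_univ, true_and, Finset.mem_singleton]
      constructor
      · rintro ⟨h1, h2, h3, h4, h5⟩
        by_contra hiv
        by_cases hiu : i = u
        · subst hiu
          simp [graphGen, huw', huw.symm, Ne.symm huw'] at h1
        · by_cases hiw : i = w
          · subst hiw
            simp [graphGen, huw, hiu] at h1
          · simp only [graphGen, if_neg hiu, if_neg hiv, if_neg hiw] at h1 h2 h3 h4 h5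
            split_ifs at h1 h2 h3 h4 h5 <;> simp_all
      · rintro rfl
        simp [graphGen, huv, hvw.symm, hvw', Ne.symm huv', Ne.symm hvw']
    rw [hset, Finset.card_singleton]
    exact odd_one
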